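/- Let (X,d) be a complete metric space, k ∈ ℕ, and T : X^k → X satisfy for all u₁,…,u_k, v₁,…,v_k ∈ X: d(T(u₁,…,u_k), T(v₁,…,v_k)) ≤ (β(d(u_k, v_k))/2)·( d(T(u₁,…,u_k), v_k) + d(T(v₁,…,v_k), u_k) ), where β is a Geraghty function. Then T has a fixed point, i.e., there exists u ∈ X with T(u,…,u) = u. -/
import Mathlib
open Filter Topology

def IsGeraghty (β : ℝ → ℝ) : Prop :=
  (∀ t : ℝ, 0 ≤ t → 0 ≤ β t ∧ β t < 1) ∧
  (∀ t : ℕ → ℝ, (∀ n, 0 ≤ t n) →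
    Filter.Tendsto (fun n => β (t n)) Filter.atTop (nhds 1) →
    Filter.Tendsto t Filter.atTop (nhds 0))

lemma fisher_geraghty_1d {X : Type*} [MetricSpace X] [CompleteSpace X] [Nonempty X]
    (β : ℝ → ℝ) (hβ : IsGeraghty β) (f : X → X)
    (key : ∀ u v : X, dist (f u) (f v) ≤ β (dist u v) / 2 * (dist (f u) v + dist (f v) u)) :
    ∃ u : X, f u = u := by
  classical
  obtain ⟨x0⟩ := ‹Nonempty X›
  set x : ℕ → X := fun n => f^[n] x0 with hxdef
  have hx : ∀ n, x (n+1) = f (x n) := fun n => Function.iterate_succ_apply' f n x0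
  set d : ℕ → ℝ := fun n => dist (x n) (x (n+1)) with hddef
  have hd0 : ∀ n, 0 ≤ d n := fun n => dist_nonneg
  have hβ1 : ∀ t : ℝ, 0 ≤ t → 0 ≤ β t := fun t ht => (hβ.1 t ht).1
  have hβ2 : ∀ t : ℝ, 0 ≤ t → β t < 1 := fun t ht => (hβ.1 t ht).2
  -- basic step inequality
  have step : ∀ n, 2 * d (n+1) ≤ β (d n) * (d (n+1) + d n) := by
    intro n
    have h1 : dist (f (x n)) (f (x (n+1))) ≤
        β (dist (x n) (x (n+1))) / 2 * (dist (f (x n)) (x (n+1)) + dist (f (x (n+1))) (x n)) :=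
      key (x n) (x (n+1))
    rw [← hx n, ← hx (n+1)] at h1
    have h2 : dist (x (n+1)) (x (n+1)) = 0 := dist_self _
    have h3 : dist (x (n+2)) (x n) ≤ d (n+1) + d n := by
      have t := dist_triangle (x (n+2)) (x (n+1)) (x n)
      have e1 : dist (x (n+2)) (x (n+1)) = dist (x (n+1)) (x (n+2)) := dist_comm _ _
      have e2 : dist (x (n+1)) (x n) = dist (x n) (x (n+1)) := dist_comm _ _
      simp only [hddef]
      linarith
    have hb0 := hβ1 _ (dist_nonneg (x := x n) (y := x (n+1)))
    have : d (n+1) ≤ β (d n) / 2 * (0 + dist (x (n+2)) (x n)) := by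
      simpa [hddef, h2] using h1
    nlinarith [this, h3]
  have hanti : ∀ n, d (n+1) ≤ d n := by
    intro n
    have h := step n
    have hb0 := hβ1 _ (hd0 n)
    have hb1 := hβ2 _ (hd0 n)
    nlinarith [hd0 n, hd0 (n+1)]
  have hantitone : Antitone d := antitone_nat_of_succ_le hanti
  -- d tends to 0
  have hdlim : Tendsto d atTop (nhds 0) := by
    have hbdd : BddBelow (Set.range d) := ⟨0, fun y ⟨n, hn⟩ => hn ▸ hd0 n⟩
    set L := ⨅ n, d n with hL
    have hL0 : 0 ≤ L := le_ciInf hd0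
    have hlim : Tendsto d atTop (nhds L) := tendsto_atTop_ciInf hantitone hbdd
    rcases eq_or_lt_of_le hL0 with h|h
    · rwa [← h] at hlim
    · exfalso
      have hLle : ∀ n, L ≤ d n := fun n => ciInf_le hbdd n
      have hden : ∀ n, 0 < d (n+1) + d n := fun n => by
        have := hLle n; have := hLle (n+1); linarith
      have hlow : ∀ n, 2 * d (n+1) / (d (n+1) + d n) ≤ β (d n) := fun n => by
        rw [div_le_iff₀ (hden n)]; exact step n
      have h1 : Tendsto (fun n => d (n+1)) atTop (nhds L) :=
        hlim.comp (tendsto_add_atTop_nat 1)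
      have h2 : Tendsto (fun n => 2 * d (n+1) / (d (n+1) + d n)) atTop (nhds (2*L/(L+L))) :=
        (h1.const_mul 2).div (h1.add hlim) (by linarith)
      have h3 : 2*L/(L+L) = 1 := by field_simp; ring
      rw [h3] at h2
      have hblim : Tendsto (fun n => β (d n)) atTop (nhds 1) :=
        tendsto_of_tendsto_of_tendsto_of_le_of_le h2 tendsto_const_nhds hlow
          (fun n => (hβ2 _ (hd0 n)).le)
      have hzero := hβ.2 d hd0 hblim
      have : L = 0 := tendsto_nhds_unique hlim hzero
      linarith
  -- Cauchy
  have hcauchy : CauchySeq x := by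
    rw [Metric.cauchySeq_iff]
    by_contra hc
    push_neg at hc
    obtain ⟨ε, hε, H⟩ := hc
    have exists_pair : ∀ i : ℕ, ∃ a b : ℕ, i ≤ a ∧ a < b ∧ ε ≤ dist (x a) (x b) := by
      intro i
      obtain ⟨a, ha, b, hb, hab⟩ := H i
      rcases lt_trichotomy a b with h|h|h
      · exact ⟨a, b, ha, h, hab⟩
      · subst h; simp [dist_self] at hab; linarith
      · exact ⟨b, a, hb, h, by rwa [dist_comm]⟩
    choose nn mm hnn hnm hdistp using exists_pair
    have hex : ∀ i, ∃ j, nn i < j ∧ ε ≤ dist (x (nn i)) (x j) := fun i => ⟨mm i, hnm i, hdistp i⟩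
    set M : ℕ → ℕ := fun i => Nat.find (hex i) with hMdef
    have hM1 : ∀ i, nn i < M i := fun i => (Nat.find_spec (hex i)).1
    have hM2 : ∀ i, ε ≤ dist (x (nn i)) (x (M i)) := fun i => (Nat.find_spec (hex i)).2
    have hMmin : ∀ i, dist (x (nn i)) (x (M i - 1)) < ε := by
      intro i
      rcases eq_or_lt_of_le (Nat.succ_le_of_lt (hM1 i)) with h|h
      · rw [← h]; simpa using hε
      · have hlt : M i - 1 < M i := by have := hM1 i; omega
        have hmin := Nat.find_min (hex i) hlt
        push_neg at hmin
        exact hmin (by omega)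
    set t : ℕ → ℝ := fun i => dist (x (nn i)) (x (M i)) with htdef
    have ht0 : ∀ i, 0 ≤ t i := fun i => dist_nonneg
    have htε : ∀ i, ε ≤ t i := hM2
    have htub : ∀ i, t i ≤ ε + d i := by
      intro i
      have h1 : dist (x (nn i)) (x (M i)) ≤
          dist (x (nn i)) (x (M i - 1)) + dist (x (M i - 1)) (x (M i)) := dist_triangle _ _ _
      have h2 : dist (x (M i - 1)) (x (M i)) = d (M i - 1) := by
        have he : M i - 1 + 1 = M i := by have := hM1 i; omega
        simp only [hddef]
        rw [he]
      have h3 : d (M i - 1) ≤ d i := hantitone (by have := hM1 i; have := hnn i; omega)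
      have h4 := hMmin i
      have fold : dist (x (nn i)) (x (M i)) = t i := rfl
      rw [fold] at h1
      linarith
    have htlim : Tendsto t atTop (nhds ε) := by
      have hup : Tendsto (fun i => ε + d i) atTop (nhds ε) := by
        simpa using (tendsto_const_nhds (x := ε) (f := (atTop : Filter ℕ))).add hdlim
      exact tendsto_of_tendsto_of_tendsto_of_le_of_le tendsto_const_nhds hup htε htub
    have hkey : ∀ i, ε - 2 * d i ≤ β (t i) * (t i + d i) := by
      intro i
      have h1 := key (x (nn i)) (x (M i))
      rw [← hx (nn i), ← hx (M i)] at h1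
      have fold : dist (x (nn i)) (x (M i)) = t i := rfl
      rw [fold] at h1
      have hb0 : 0 ≤ β (t i) := hβ1 _ (ht0 i)
      have hA : t i ≤ d (nn i) + dist (x (nn i + 1)) (x (M i + 1)) + d (M i) := by
        have u1 := dist_triangle (x (nn i)) (x (nn i + 1)) (x (M i))
        have u2 := dist_triangle (x (nn i + 1)) (x (M i + 1)) (x (M i))
        have e1 : dist (x (M i + 1)) (x (M i)) = d (M i) := dist_comm _ _
        have fold2 : dist (x (nn i)) (x (nn i + 1)) = d (nn i) := rfl
        have fold3 : dist (x (nn i)) (x (M i)) = t i := rfl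
        rw [fold3] at u1
        linarith
      have hS1 : dist (x (nn i + 1)) (x (M i)) ≤ d (nn i) + t i := by
        have u1 := dist_triangle (x (nn i + 1)) (x (nn i)) (x (M i))
        have e1 : dist (x (nn i + 1)) (x (nn i)) = d (nn i) := dist_comm _ _
        have fold3 : dist (x (nn i)) (x (M i)) = t i := rfl
        rw [fold3] at u1
        linarith
      have hS2 : dist (x (M i + 1)) (x (nn i)) ≤ d (M i) + t i := by
        have u1 := dist_triangle (x (M i + 1)) (x (M i)) (x (nn i))
        have e1 : dist (x (M i + 1)) (x (M i)) = d (M i) := dist_comm _ _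
        have e2 : dist (x (M i)) (x (nn i)) = t i := dist_comm _ _
        linarith
      have hdni : d (nn i) ≤ d i := hantitone (hnn i)
      have hdMi : d (M i) ≤ d i := hantitone (le_of_lt (lt_of_le_of_lt (hnn i) (hM1 i)))
      have hS : dist (x (nn i + 1)) (x (M i)) + dist (x (M i + 1)) (x (nn i)) ≤
          2 * (t i + d i) := by linarith
      have h2 : dist (x (nn i + 1)) (x (M i + 1)) ≤ β (t i) / 2 * (2 * (t i + d i)) :=
        le_trans h1 (mul_le_mul_of_nonneg_left hS (by linarith))
      have hA' : ε - 2 * d i ≤ dist (x (nn i + 1)) (x (M i + 1)) := by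
        have := htε i; linarith
      calc ε - 2 * d i ≤ β (t i) / 2 * (2 * (t i + d i)) := le_trans hA' h2
        _ = β (t i) * (t i + d i) := by ring
    have hblow : ∀ i, (ε - 2 * d i) / (t i + d i) ≤ β (t i) := fun i => by
      rw [div_le_iff₀ (by have := htε i; have := hd0 i; linarith)]
      exact hkey i
    have hglim : Tendsto (fun i => (ε - 2 * d i) / (t i + d i)) atTop (nhds 1) := by
      have h1 : Tendsto (fun i => ε - 2 * d i) atTop (nhds ε) := by
        simpa using (tendsto_const_nhds (x := ε) (f := (atTop : Filter ℕ))).sub (hdlim.const_mul 2)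
      have h2 : Tendsto (fun i => t i + d i) atTop (nhds ε) := by
        simpa using htlim.add hdlim
      have h3 := h1.div h2 (ne_of_gt hε)
      rwa [div_self (ne_of_gt hε)] at h3
    have hblim : Tendsto (fun i => β (t i)) atTop (nhds 1) :=
      tendsto_of_tendsto_of_tendsto_of_le_of_le hglim tendsto_const_nhds hblow
        (fun i => (hβ2 _ (ht0 i)).le)
    have htzero := hβ.2 t ht0 hblim
    have : ε ≤ 0 := ge_of_tendsto' htzero htε
    linarith
  obtain ⟨u, hu⟩ := cauchySeq_tendsto_of_complete hcauchy
  refine ⟨u, ?_⟩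
  have h1 : ∀ n, dist (f u) (x (n+1)) ≤ 1/2 * (dist (f u) (x n) + dist (x (n+1)) u) := by
    intro n
    have h := key u (x n)
    rw [← hx n] at h
    have hb0 : 0 ≤ β (dist u (x n)) := hβ1 _ dist_nonneg
    have hb1 : β (dist u (x n)) < 1 := hβ2 _ dist_nonneg
    have hnn : (0:ℝ) ≤ dist (f u) (x n) + dist (x (n+1)) u := by positivity
    nlinarith
  have hxs : Tendsto (fun n => x (n+1)) atTop (nhds u) := hu.comp (tendsto_add_atTop_nat 1)
  have l1 : Tendsto (fun n => dist (f u) (x (n+1))) atTop (nhds (dist (f u) u)) :=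
    tendsto_const_nhds.dist hxs
  have l2 : Tendsto (fun n => 1/2 * (dist (f u) (x n) + dist (x (n+1)) u)) atTop
      (nhds (1/2 * (dist (f u) u + dist u u))) :=
    ((tendsto_const_nhds.dist hu).add (hxs.dist tendsto_const_nhds)).const_mul _
  have hle := le_of_tendsto_of_tendsto' l1 l2 h1
  rw [dist_self] at hle
  have hzero : dist (f u) u = 0 := by
    have := dist_nonneg (x := f u) (y := u)
    linarith
  exact dist_eq_zero.mp hzero

theorem k_dim_fisher_geraghty {X : Type*} [MetricSpace X] [CompleteSpace X] [Nonempty X]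
    (k : ℕ) (hk : 0 < k) (β : ℝ → ℝ) (hβ : IsGeraghty β) (T : (Fin k → X) → X)
    (hT : ∀ a b : Fin k → X,
      dist (T a) (T b) ≤
        β (dist (a ⟨k - 1, by omega⟩) (b ⟨k - 1, by omega⟩)) / 2 *
          (dist (T a) (b ⟨k - 1, by omega⟩) + dist (T b) (a ⟨k - 1, by omega⟩))) :
    ∃ u : X, T (fun _ => u) = u := by
  exact fisher_geraghty_1d β hβ (fun x => T (fun _ => x))
    (fun u v => hT (fun _ => u) (fun _ => v))
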